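/- arXiv:1909.09298 — 4 statements merged into one kernel-verified Lean document; each statement's English description precedes it below -/
import Mathlib

section
/- In a finite graph of maximum degree Δ, the number of connected subgraphs on k vertices containing a fixed vertex v is at most (eΔ)^k. -/
/-!
Explore a connected `k`-set `S ∋ v` from `v`, each time adding some vertex of `S` adjacent to
the part explored so far; this lists `S` as `x₀ = v, x₁, …, x_{k-1}`. Record each `x_p` with
`p ≥ 1` by the pair `(j, a)`, where `x_j` is its *first* neighbour in the list and `a` is the
position of `x_p` among the neighbours of `x_j`. These `k - 1` pairs lie in `[0, k) × [0, Δ)`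
and determine `S`: replaying the exploration, the vertices eligible at step `i` are exactly
those named by recorded pairs with `j ≤ i` (minimality of `j` gives one inclusion). Hence there
are at most `C(kΔ, k - 1) ≤ C(kΔ, k) ≤ (kΔ)^k / k! ≤ (eΔ)^k` such sets.
-/

open Finset

open Classical in
noncomputable def Set.pickOr {α : Type*} (s : Set α) (a : α) : α :=
  if h : s.Nonempty then h.some else a

lemma Set.pickOr_mem {α : Type*} {s : Set α} (h : s.Nonempty) (a : α) : s.pickOr a ∈ s := by
  rw [Set.pickOr, dif_pos h]
  exact h.some_mem

namespace SimpleGraph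

variable {V : Type*} (G : SimpleGraph V)

section NeighborIndex

variable [DecidableEq V] [G.LocallyFinite]

noncomputable def neighborIndex (u w : V) : ℕ := (G.neighborFinset u).toList.idxOf w

variable {G}

lemma neighborIndex_lt_degree {u w : V} (h : G.Adj u w) : G.neighborIndex u w < G.degree u := by
  rw [neighborIndex, ← card_neighborFinset_eq_degree, ← length_toList]
  exact List.idxOf_lt_length_iff.2 (by simpa using h)

lemma neighborIndex_injOn (u : V) : Set.InjOn (G.neighborIndex u) (G.neighborSet u) :=
  fun _ hw _ _ h => (List.idxOf_inj (by simpa using hw)).1 h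

end NeighborIndex

def frontierIn (S P : Finset V) : Set V := {u | u ∈ S ∧ u ∉ P ∧ ∃ w ∈ P, G.Adj w u}

variable {G} in
lemma frontierIn_nonempty {S P : Finset V} (hconn : (G.induce (S : Set V)).Connected)
    (hP : P.Nonempty) (hPS : P ⊂ S) : (G.frontierIn S P).Nonempty := by
  obtain ⟨w, hw⟩ := hP
  obtain ⟨u, huS, huP⟩ := exists_of_ssubset hPS
  obtain ⟨walk⟩ := hconn.preconnected ⟨w, hPS.subset hw⟩ ⟨u, huS⟩
  obtain ⟨d, -, hd₁, hd₂⟩ :=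
    walk.exists_boundary_dart {x : (S : Set V) | (x : V) ∈ P} hw huP
  exact ⟨d.snd, d.snd.2, hd₂, d.fst, hd₁, d.adj⟩

section Exploration

variable [DecidableEq V] (S : Finset V) (v : V)

noncomputable def exploreSet : ℕ → Finset V
  | 0 => {v}
  | i + 1 => insert ((G.frontierIn S (exploreSet i)).pickOr v) (exploreSet i)

noncomputable def explore : ℕ → V
  | 0 => v
  | i + 1 => (G.frontierIn S (G.exploreSet S v i)).pickOr v

lemma exploreSet_eq_image (n : ℕ) :
    G.exploreSet S v n = (range (n + 1)).image (G.explore S v) := by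
  induction n with
  | zero => rfl
  | succ i ih => rw [range_add_one, image_insert, ← ih]; rfl

variable {G S v}

lemma explore_mem (hv : v ∈ S) : ∀ n, G.explore S v n ∈ S
  | 0 => hv
  | i + 1 => by
    rw [explore, Set.pickOr]
    split_ifs with h
    · exact h.some_mem.1
    · exact hv

lemma exploreSet_subset (hv : v ∈ S) (n : ℕ) : G.exploreSet S v n ⊆ S := by
  rw [exploreSet_eq_image]
  exact image_subset_iff.2 fun i _ => explore_mem hv i

lemma mem_exploreSet {n j : ℕ} (h : j ≤ n) : G.explore S v j ∈ G.exploreSet S v n := by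
  rw [exploreSet_eq_image]
  exact mem_image_of_mem _ (mem_range.2 (by omega))

variable (hv : v ∈ S) (hconn : (G.induce (S : Set V)).Connected)
include hv hconn

lemma card_exploreSet {n : ℕ} (hn : n < #S) : #(G.exploreSet S v n) = n + 1 := by
  induction n with
  | zero => rfl
  | succ i ih =>
    have hi := ih (by omega)
    have hne : (G.frontierIn S (G.exploreSet S v i)).Nonempty :=
      frontierIn_nonempty hconn ⟨v, mem_exploreSet (Nat.zero_le i)⟩
        (ssubset_of_subset_of_ne (exploreSet_subset hv i) (fun he => by rw [he] at hi; omega))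
    rw [exploreSet, card_insert_of_notMem (Set.pickOr_mem hne v).2.1, hi]

lemma explore_succ_mem_frontierIn {i : ℕ} (h : i + 1 < #S) :
    G.explore S v (i + 1) ∈ G.frontierIn S (G.exploreSet S v i) := by
  refine Set.pickOr_mem (frontierIn_nonempty hconn ⟨v, mem_exploreSet (Nat.zero_le i)⟩
    (ssubset_of_subset_of_ne (exploreSet_subset hv i) ?_)) v
  intro he
  have := card_exploreSet hv hconn (n := i) (by omega)
  rw [he] at this
  omega

lemma image_explore_range : (range #S).image (G.explore S v) = S := by
  have hS : 0 < #S := card_pos.2 ⟨v, hv⟩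
  have hcard := card_exploreSet hv hconn (n := #S - 1) (by omega)
  rw [exploreSet_eq_image, Nat.sub_add_cancel hS] at hcard
  exact eq_of_subset_of_card_le (image_subset_iff.2 fun i _ => explore_mem hv i) hcard.ge

lemma injOn_explore : Set.InjOn (G.explore S v) (range #S) := by
  rw [← card_image_iff, image_explore_range hv hconn, card_range]

omit hv hconn

variable (G S v) in
open Classical in
noncomputable def exploreParent (p : ℕ) : ℕ :=
  if h : ∃ j, G.Adj (G.explore S v j) (G.explore S v p) then Nat.find h else 0

lemma exploreParent_le {p j : ℕ} (h : G.Adj (G.explore S v j) (G.explore S v p)) :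
    G.exploreParent S v p ≤ j := by
  classical
  rw [exploreParent, dif_pos ⟨j, h⟩]
  exact Nat.find_min' _ h

include hv hconn in
lemma exploreParent_spec {p : ℕ} (hp : 0 < p) (hpS : p < #S) :
    G.exploreParent S v p < p ∧
      G.Adj (G.explore S v (G.exploreParent S v p)) (G.explore S v p) := by
  classical
  obtain ⟨i, rfl⟩ : ∃ i, p = i + 1 := ⟨p - 1, by omega⟩
  obtain ⟨-, -, w, hw, hadj⟩ := explore_succ_mem_frontierIn hv hconn hpS
  rw [exploreSet_eq_image] at hw
  obtain ⟨j, hj, rfl⟩ := mem_image.1 hw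
  have hex : ∃ j, G.Adj (G.explore S v j) (G.explore S v (i + 1)) := ⟨j, hadj⟩
  refine ⟨(exploreParent_le hadj).trans_lt (by simpa [Nat.lt_succ_iff] using hj), ?_⟩
  rw [exploreParent, dif_pos hex]
  exact Nat.find_spec hex

section Code

variable [G.LocallyFinite]

variable (G S v) in
noncomputable def exploreCode : Finset (ℕ × ℕ) :=
  (Ico 1 #S).image fun p =>
    (G.exploreParent S v p,
      G.neighborIndex (G.explore S v (G.exploreParent S v p)) (G.explore S v p))

variable (G) in
def codeCandidates (c : Finset (ℕ × ℕ)) (x : ℕ → V) (i : ℕ) : Set V :=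
  {w | w ∉ (range (i + 1)).image x ∧
    ∃ q ∈ c, q.1 ≤ i ∧ G.Adj (x q.1) w ∧ G.neighborIndex (x q.1) w = q.2}

include hv hconn

lemma card_exploreCode : #(G.exploreCode S v) = #S - 1 := by
  rw [exploreCode, card_image_of_injOn, Nat.card_Ico]
  intro p hp q hq he
  simp only [coe_Ico, Set.mem_Ico] at hp hq
  obtain ⟨hparent, hidx⟩ := Prod.mk.inj he
  have hp' := exploreParent_spec hv hconn (by omega) hp.2
  have hq' := exploreParent_spec hv hconn (by omega) hq.2
  rw [hparent] at hp' hidx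
  have hx := neighborIndex_injOn _ hp'.2 hq'.2 hidx
  exact injOn_explore hv hconn (mem_range.2 (by omega)) (mem_range.2 (by omega)) hx

lemma exploreCode_subset {Δ : ℕ} (hdeg : ∀ u, G.degree u ≤ Δ) :
    G.exploreCode S v ⊆ range #S ×ˢ range Δ := by
  intro q hq
  obtain ⟨p, hp, rfl⟩ := mem_image.1 hq
  obtain ⟨hp1, hpS⟩ := mem_Ico.1 hp
  have hspec := exploreParent_spec hv hconn hp1 hpS
  exact mem_product.2 ⟨mem_range.2 (by omega),
    mem_range.2 ((neighborIndex_lt_degree hspec.2).trans_le (hdeg _))⟩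

lemma frontierIn_exploreSet_eq_codeCandidates (i : ℕ) :
    G.frontierIn S (G.exploreSet S v i) =
      G.codeCandidates (G.exploreCode S v) (G.explore S v) i := by
  ext w
  simp only [frontierIn, codeCandidates, exploreSet_eq_image, Set.mem_ofPred_eq]
  constructor
  · rintro ⟨hwS, hwP, w', hw', hadj⟩
    rw [← image_explore_range hv hconn] at hwS
    obtain ⟨p, hpS, rfl⟩ := mem_image.1 hwS
    obtain ⟨j, hj, rfl⟩ := mem_image.1 hw'
    have hip : i < p := by
      by_contra! hpi
      exact hwP (mem_image_of_mem _ (mem_range.2 (by omega)))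
    simp only [mem_range] at hpS hj
    have hspec := exploreParent_spec hv hconn (by omega) hpS
    refine ⟨hwP, _, mem_image_of_mem _ (mem_Ico.2 ⟨by omega, hpS⟩),
      (exploreParent_le hadj).trans (by omega), hspec.2, rfl⟩
  · rintro ⟨hwP, q, hq, hqi, hadj, hidx⟩
    obtain ⟨p, hp, rfl⟩ := mem_image.1 hq
    obtain ⟨hp1, hpS⟩ := mem_Ico.1 hp
    have hspec := exploreParent_spec hv hconn hp1 hpS
    have hw : w = G.explore S v p := neighborIndex_injOn _ hadj hspec.2 hidx
    subst hw
    exact ⟨explore_mem hv p, hwP, _, mem_image_of_mem _ (mem_range.2 (by omega)), hadj⟩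

lemma explore_succ_eq (i : ℕ) :
    G.explore S v (i + 1) =
      (G.codeCandidates (G.exploreCode S v) (G.explore S v) i).pickOr v := by
  rw [explore, frontierIn_exploreSet_eq_codeCandidates hv hconn]

omit hv hconn

lemma codeCandidates_congr {c : Finset (ℕ × ℕ)} {x y : ℕ → V} {i : ℕ}
    (h : ∀ j ≤ i, x j = y j) :
    G.codeCandidates c x i = G.codeCandidates c y i := by
  have himage : (range (i + 1)).image x = (range (i + 1)).image y :=
    image_congr fun j hj => h j (Nat.lt_succ_iff.1 (mem_range.1 hj))
  ext w
  simp only [codeCandidates, himage, Set.mem_ofPred_eq]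
  refine and_congr_right fun _ => exists_congr fun q => and_congr_right fun _ => ?_
  exact and_congr_right fun hq => by rw [h _ hq]

end Code

end Exploration

variable {G} in
lemma exploreCode_injOn [DecidableEq V] [G.LocallyFinite] (v : V) :
    Set.InjOn (G.exploreCode · v) {S | v ∈ S ∧ (G.induce (S : Set V)).Connected} := by
  rintro S ⟨hvS, hS⟩ T ⟨hvT, hT⟩ (hcode : G.exploreCode S v = G.exploreCode T v)
  have hagree : ∀ i, ∀ j ≤ i, G.explore S v j = G.explore T v j := by
    intro i
    induction i with
    | zero => intro j hj; rw [Nat.le_zero.1 hj]; rfl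
    | succ i ih =>
      intro j hj
      rcases Nat.le_succ_iff.1 hj with hj | rfl
      · exact ih j hj
      · rw [explore_succ_eq hvS hS, explore_succ_eq hvT hT, hcode, codeCandidates_congr ih]
  have hcard : #S = #T := by
    have := card_exploreCode hvS hS
    rw [hcode, card_exploreCode hvT hT] at this
    have := card_pos.2 ⟨v, hvS⟩
    have := card_pos.2 ⟨v, hvT⟩
    omega
  rw [← image_explore_range hvS hS, ← image_explore_range hvT hT, hcard]
  exact image_congr fun j _ => hagree j j le_rfl

open Classical in
theorem card_connected_finsets_le_choose [Fintype V] [DecidableRel G.Adj] {Δ : ℕ}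
    (hdeg : ∀ u, G.degree u ≤ Δ) (v : V) (k : ℕ) :
    #{s : Finset V | v ∈ s ∧ #s = k ∧ (G.induce (s : Set V)).Connected} ≤
      (k * Δ).choose (k - 1) := by
  calc _ ≤ #(powersetCard (k - 1) (range k ×ˢ range Δ)) := by
        refine card_le_card_of_injOn (G.exploreCode · v) ?_ ?_
        · intro s hs
          obtain ⟨-, hv, rfl, hconn⟩ := mem_filter.1 (mem_coe.1 hs)
          exact mem_powersetCard.2 ⟨exploreCode_subset hv hconn hdeg, card_exploreCode hv hconn⟩
        · refine (exploreCode_injOn v).mono fun s hs => ?_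
          obtain ⟨-, hv, -, hconn⟩ := mem_filter.1 (mem_coe.1 hs)
          exact ⟨hv, hconn⟩
    _ = (k * Δ).choose (k - 1) := by rw [card_powersetCard, card_product, card_range, card_range]

end SimpleGraph

open Nat in
lemma Nat.choose_mul_pred_le_exp_mul_pow {k Δ : ℕ} (hk : 1 ≤ k) (hΔ : 2 ≤ Δ) :
    ((k * Δ).choose (k - 1) : ℝ) ≤ (Real.exp 1 * Δ) ^ k := by
  have hmono : (k * Δ).choose (k - 1) ≤ (k * Δ).choose k := by
    have h2k : 2 * k ≤ k * Δ := by nlinarith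
    have := Nat.choose_le_succ_of_lt_half_left (r := k - 1) (n := k * Δ) (by omega)
    rwa [Nat.sub_add_cancel hk] at this
  calc ((k * Δ).choose (k - 1) : ℝ) ≤ (k * Δ).choose k := by exact_mod_cast hmono
    _ ≤ ((k * Δ : ℕ) : ℝ) ^ k / k ! := Nat.choose_le_pow_div k (k * Δ)
    _ = Δ ^ k * (k ^ k / k !) := by push_cast; ring
    _ ≤ Δ ^ k * Real.exp k := by gcongr; exact Real.pow_div_factorial_le_exp _ (by positivity) k
    _ = (Real.exp 1 * Δ) ^ k := by rw [mul_pow, ← Real.exp_one_pow]; ring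

open Classical in
theorem card_connected_subsets_le_general {V : Type*} [Fintype V]
    (G : SimpleGraph V) [DecidableRel G.Adj] (Δ k : ℕ) (hΔ : 2 ≤ Δ)
    (hdeg : ∀ v, G.degree v ≤ Δ) (v : V) (hk : 1 ≤ k) :
    (Nat.card {s : Finset V // v ∈ s ∧ s.card = k ∧
        (SimpleGraph.induce (↑s : Set V) G).Connected} : ℝ) ≤
      (Real.exp 1 * Δ) ^ k := by
  rw [Nat.card_eq_fintype_card, Fintype.card_subtype]
  calc _ ≤ ((k * Δ).choose (k - 1) : ℝ) := by
        exact_mod_cast G.card_connected_finsets_le_choose hdeg v k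
    _ ≤ (Real.exp 1 * Δ) ^ k := Nat.choose_mul_pred_le_exp_mul_pow hk hΔ

open Classical in
theorem card_connected_subsets_le {V : Type*} [Fintype V] [DecidableEq V]
    (G : SimpleGraph V) [DecidableRel G.Adj] (Δ k : ℕ) (hΔ : 2 ≤ Δ)
    (hdeg : ∀ v, G.degree v ≤ Δ) (v : V) (hk : 1 ≤ k) :
    (Nat.card {s : Finset V // v ∈ s ∧ s.card = k ∧
        (SimpleGraph.induce (↑s : Set V) G).Connected} : ℝ) ≤
      (Real.exp 1 * Δ) ^ k :=
  card_connected_subsets_le_general G Δ k hΔ hdeg v hk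
end

section
/- For any finite graph G of maximum degree at most 2d, the random cluster partition function with parameters p and q can be written as Z^RC_G(p,q) = (1−p)^{|E(G)|} q^{|V(G)|} · Ξ(G), where Ξ(G) is the polymer partition function over collections of vertex-disjoint connected subgraphs with at least two vertices, each polymer γ having weight (p/(1−p))^{|E(γ)|} q^{1−|V(γ)|}. -/
attribute [local instance] Classical.propDecidable

/-- A polymer of the high-temperature expansion: a connected subgraph of `G` with at
least two vertices, given by its vertex set and a subset of the edges of `G` inside it. -/
def IsPolymer {V : Type*} (G : SimpleGraph V) (γ : Finset V × Finset (Sym2 V)) : Prop :=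
  (↑γ.2 : Set (Sym2 V)) ⊆ G.edgeSet ∧ (∀ e ∈ γ.2, ∀ v ∈ e, v ∈ γ.1) ∧
    2 ≤ γ.1.card ∧
    (SimpleGraph.induce (↑γ.1 : Set V) (SimpleGraph.fromEdgeSet (↑γ.2 : Set (Sym2 V)))).Connected

/-!
An edge set `A ⊆ E(G)` is the same thing as a family of vertex-disjoint polymers: the connected
components of `(V, A)` with at least two vertices, each carrying the edges of `A` inside it, and
conversely `A` is the union of the edge sets of the family. Under this bijection
`|A| = ∑ |E(γ)|` and, since singleton components contribute `1 - 1 = 0`,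
`c(A) = |V| + ∑ (1 - |V(γ)|)`; so the weight `p^|A| (1-p)^(|E|-|A|) q^c(A)` of `A` factors
as `(1-p)^|E| q^|V|` times the product of the polymer weights.
-/

open Finset SimpleGraph

theorem Finset.prod_zpow_eq_zpow_sum {ι α : Type*} [CommGroupWithZero α] (s : Finset ι)
    {a : α} (ha : a ≠ 0) (f : ι → ℤ) : ∏ i ∈ s, a ^ f i = a ^ ∑ i ∈ s, f i := by
  induction s using Finset.cons_induction with
  | empty => simp
  | cons i s hi ih => rw [prod_cons, sum_cons, ih, zpow_add₀ ha]

namespace SimpleGraph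

variable {V : Type*}

theorem sum_card_supp_toFinset [Fintype V] (H : SimpleGraph V) [Fintype H.ConnectedComponent]
    [∀ c : H.ConnectedComponent, Fintype c.supp] :
    ∑ c : H.ConnectedComponent, #c.supp.toFinset = Fintype.card V := by
  rw [← card_univ,
    card_eq_sum_card_fiberwise (f := H.connectedComponentMk) fun _ _ ↦ mem_univ _]
  congr! with c
  ext v
  simp

theorem ConnectedComponent.supp_eq_of_connected_of_adj_closed {H : SimpleGraph V} {S : Set V}
    (hconn : (H.induce S).Connected) (hclosed : ∀ ⦃u w⦄, u ∈ S → H.Adj u w → w ∈ S)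
    {v : V} (hv : v ∈ S) : (H.connectedComponentMk v).supp = S := by
  ext u
  rw [mem_supp_iff, ConnectedComponent.eq]
  refine ⟨fun huv ↦ ?_, fun hu ↦ ?_⟩
  · rw [reachable_eq_reflTransGen] at huv
    induction huv using Relation.ReflTransGen.head_induction_on with
    | refl => exact hv
    | head hadj _ ih => exact hclosed ih hadj.symm
  · exact hconn.preconnected ⟨u, hu⟩ ⟨v, hv⟩ |>.map (Embedding.induce S).toHom

theorem induce_fromEdgeSet_filter (S : Set V)
    [DecidablePred fun e : Sym2 V ↦ ∀ v ∈ e, v ∈ S] (A : Finset (Sym2 V)) :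
    (fromEdgeSet ↑{e ∈ A | ∀ v ∈ e, v ∈ S}).induce S = (fromEdgeSet ↑A).induce S := by
  ext ⟨x, hx⟩ ⟨y, hy⟩
  simp [hx, hy]

end SimpleGraph

namespace RandomCluster

variable {V : Type*} {G : SimpleGraph V}

theorem _root_.IsPolymer.mem_of_mem_edge {γ : Finset V × Finset (Sym2 V)} (hγ : IsPolymer G γ)
    {e : Sym2 V} (he : e ∈ γ.2) {v : V} (hv : v ∈ e) : v ∈ γ.1 :=
  hγ.2.1 e he v hv

abbrev Polymer (G : SimpleGraph V) := {γ : Finset V × Finset (Sym2 V) // IsPolymer G γ}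

section EdgesOf

variable {Γ : Finset (Polymer G)}

noncomputable def edgesOf (Γ : Finset (Polymer G)) : Finset (Sym2 V) :=
  Γ.biUnion fun γ ↦ γ.val.2

theorem coe_edgesOf_subset : (edgesOf Γ : Set (Sym2 V)) ⊆ G.edgeSet := by
  intro e he
  obtain ⟨γ, -, he⟩ := mem_biUnion.mp he
  exact γ.prop.1 he

theorem eq_of_mem_edge_of_mem_verts (hΓ : (Γ : Set (Polymer G)).PairwiseDisjoint (·.val.1))
    {γ γ' : Polymer G} (hγ : γ ∈ Γ) (hγ' : γ' ∈ Γ) {e : Sym2 V} (he : e ∈ γ'.val.2)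
    {v : V} (hve : v ∈ e) (hv : v ∈ γ.val.1) : γ' = γ :=
  hΓ.elim_finset hγ' hγ v (γ'.prop.mem_of_mem_edge he hve) hv

theorem card_edgesOf (hΓ : (Γ : Set (Polymer G)).PairwiseDisjoint (·.val.1)) :
    #(edgesOf Γ) = ∑ γ ∈ Γ, #γ.val.2 := by
  refine card_biUnion fun γ hγ γ' hγ' hne ↦ disjoint_left.mpr fun e he he' ↦ hne ?_
  exact eq_of_mem_edge_of_mem_verts hΓ hγ' hγ he (Sym2.out_fst_mem e)
    (γ'.prop.mem_of_mem_edge he' (Sym2.out_fst_mem e))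

theorem supp_connectedComponentMk_edgesOf
    (hΓ : (Γ : Set (Polymer G)).PairwiseDisjoint (·.val.1)) {γ : Polymer G} (hγ : γ ∈ Γ)
    {v : V} (hv : v ∈ γ.val.1) :
    ((fromEdgeSet (edgesOf Γ : Set (Sym2 V))).connectedComponentMk v).supp = γ.val.1 := by
  refine ConnectedComponent.supp_eq_of_connected_of_adj_closed ?_ (fun u w hu hadj ↦ ?_) hv
  · exact γ.prop.2.2.2.mono <|
      comap_monotone _ <| fromEdgeSet_mono <| coe_subset.mpr <| subset_biUnion_of_mem _ hγ
  · obtain ⟨γ', hγ', he⟩ := mem_biUnion.mp ((fromEdgeSet_adj _).mp hadj).1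
    obtain rfl := eq_of_mem_edge_of_mem_verts hΓ hγ hγ' he (Sym2.mem_mk_left u w) hu
    exact γ'.prop.mem_of_mem_edge he (Sym2.mem_mk_right u w)

end EdgesOf

section PolymersOf

variable [Fintype V] {A : Finset (Sym2 V)}

noncomputable def componentPolymer (A : Finset (Sym2 V))
    (c : (fromEdgeSet (A : Set (Sym2 V))).ConnectedComponent) : Finset V × Finset (Sym2 V) :=
  (c.supp.toFinset, {e ∈ A | ∀ v ∈ e, v ∈ c.supp})

theorem isPolymer_componentPolymer (hA : (A : Set (Sym2 V)) ⊆ G.edgeSet)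
    {c : (fromEdgeSet (A : Set (Sym2 V))).ConnectedComponent} (hc : 2 ≤ #c.supp.toFinset) :
    IsPolymer G (componentPolymer A c) := by
  refine ⟨fun e he ↦ hA (mem_filter.mp he).1, fun e he v hv ↦ ?_, hc, ?_⟩
  · exact Set.mem_toFinset.mpr ((mem_filter.mp he).2 v hv)
  · dsimp only [componentPolymer]
    rw [Set.coe_toFinset, induce_fromEdgeSet_filter]
    exact c.connected_toSimpleGraph

variable (G) in
noncomputable def polymersOf (A : Finset (Sym2 V)) : Finset (Polymer G) :=
  {γ | ∃ c, 2 ≤ #c.supp.toFinset ∧ γ.val = componentPolymer A c}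

theorem mem_polymersOf {γ : Polymer G} :
    γ ∈ polymersOf G A ↔ ∃ c, 2 ≤ #c.supp.toFinset ∧ γ.val = componentPolymer A c := by
  simp [polymersOf]

theorem pairwiseDisjoint_polymersOf :
    (polymersOf G A : Set (Polymer G)).PairwiseDisjoint (·.val.1) := by
  intro γ hγ γ' hγ' hne
  obtain ⟨c, -, hc⟩ := mem_polymersOf.mp hγ
  obtain ⟨c', -, hc'⟩ := mem_polymersOf.mp hγ'
  have hcc' : c ≠ c' := by
    rintro rfl
    exact hne (Subtype.ext (hc.trans hc'.symm))
  simp only [Function.onFun, hc, hc', componentPolymer, Set.disjoint_toFinset]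
  exact pairwise_disjoint_supp_connectedComponent _ hcc'

theorem edgesOf_polymersOf (hA : (A : Set (Sym2 V)) ⊆ G.edgeSet) :
    edgesOf (polymersOf G A) = A := by
  ext e
  refine ⟨fun he ↦ ?_, fun he ↦ ?_⟩
  · obtain ⟨γ, hγ, he⟩ := mem_biUnion.mp he
    obtain ⟨c, -, hc⟩ := mem_polymersOf.mp hγ
    rw [hc] at he
    exact (mem_filter.mp he).1
  induction e with | h a b =>
  have hadj : (fromEdgeSet (A : Set (Sym2 V))).Adj a b :=
    (fromEdgeSet_adj _).mpr ⟨he, G.not_isDiag_of_mem_edgeSet (hA he)⟩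
  set c := (fromEdgeSet (A : Set (Sym2 V))).connectedComponentMk a
  have ha : a ∈ c.supp := rfl
  have hb : b ∈ c.supp := c.mem_supp_of_adj_mem_supp ha hadj
  have hc : 2 ≤ #c.supp.toFinset :=
    one_lt_card.mpr ⟨a, Set.mem_toFinset.mpr ha, b, Set.mem_toFinset.mpr hb, hadj.ne⟩
  refine mem_biUnion.mpr
    ⟨⟨_, isPolymer_componentPolymer hA hc⟩, mem_polymersOf.mpr ⟨c, hc, rfl⟩, ?_⟩
  exact mem_filter.mpr
    ⟨he, fun v hv ↦ by rcases Sym2.mem_iff.mp hv with rfl | rfl <;> assumption⟩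

theorem sum_polymersOf {M : Type*} [AddCommMonoid M] (hA : (A : Set (Sym2 V)) ⊆ G.edgeSet)
    (f : Finset V × Finset (Sym2 V) → M) :
    ∑ γ ∈ polymersOf G A, f γ.val =
      ∑ c with 2 ≤ #c.supp.toFinset, f (componentPolymer A c) := by
  symm
  refine sum_bij
    (fun c hc ↦ ⟨componentPolymer A c, isPolymer_componentPolymer hA (mem_filter.mp hc).2⟩)
    (fun c hc ↦ mem_polymersOf.mpr ⟨c, (mem_filter.mp hc).2, rfl⟩) (fun c _ c' _ h ↦ ?_)
    (fun γ hγ ↦ ?_) fun _ _ ↦ rfl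
  · simpa [componentPolymer] using congrArg (fun γ : Polymer G ↦ γ.val.1) h
  · obtain ⟨c, hc, hγc⟩ := mem_polymersOf.mp hγ
    exact ⟨c, mem_filter.mpr ⟨mem_univ _, hc⟩, Subtype.ext hγc.symm⟩

end PolymersOf

section Bijection

variable [Fintype V] {Γ : Finset (Polymer G)}

theorem componentPolymer_edgesOf
    (hΓ : (Γ : Set (Polymer G)).PairwiseDisjoint (·.val.1)) {γ : Polymer G} (hγ : γ ∈ Γ)
    {v : V} (hv : v ∈ γ.val.1) :
    componentPolymer (edgesOf Γ)
      ((fromEdgeSet (edgesOf Γ : Set (Sym2 V))).connectedComponentMk v) = γ.val := by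
  have hsupp := supp_connectedComponentMk_edgesOf hΓ hγ hv
  refine Prod.ext (by simp [componentPolymer, hsupp]) (Finset.ext fun e ↦ ?_)
  simp only [componentPolymer, mem_filter, hsupp, mem_coe]
  refine ⟨fun ⟨he, hev⟩ ↦ ?_, fun he ↦ ?_⟩
  · obtain ⟨γ', hγ', he'⟩ := mem_biUnion.mp he
    obtain rfl := eq_of_mem_edge_of_mem_verts hΓ hγ hγ' he' (Sym2.out_fst_mem e)
      (hev _ (Sym2.out_fst_mem e))
    exact he'
  · exact ⟨mem_biUnion.mpr ⟨γ, hγ, he⟩, fun _ ↦ γ.prop.mem_of_mem_edge he⟩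

theorem polymersOf_edgesOf (hΓ : (Γ : Set (Polymer G)).PairwiseDisjoint (·.val.1)) :
    polymersOf G (edgesOf Γ) = Γ := by
  ext γ
  rw [mem_polymersOf]
  constructor
  · rintro ⟨c, hc, hγc⟩
    obtain ⟨a, ha, b, hb, hab⟩ := one_lt_card.mp hc
    rw [Set.mem_toFinset] at ha hb
    obtain ⟨w, hadj⟩ := mem_support_of_reachable hab (c.reachable_of_mem_supp ha hb)
    obtain ⟨γ', hγ', he⟩ := mem_biUnion.mp ((fromEdgeSet_adj _).mp hadj).1
    have hγγ' : γ = γ' := by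
      refine Subtype.ext ?_
      rw [hγc, ← ha,
        componentPolymer_edgesOf hΓ hγ' (γ'.prop.mem_of_mem_edge he (Sym2.mem_mk_left a w))]
    exact hγγ' ▸ hγ'
  · intro hγ
    obtain ⟨v, hv⟩ := card_pos.mp (zero_lt_two.trans_le γ.prop.2.2.1)
    refine ⟨_, ?_, (componentPolymer_edgesOf hΓ hγ hv).symm⟩
    simpa [supp_connectedComponentMk_edgesOf hΓ hγ hv] using γ.prop.2.2.1

theorem natCard_connectedComponent_eq {A : Finset (Sym2 V)}
    (hA : (A : Set (Sym2 V)) ⊆ G.edgeSet) :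
    (Nat.card (fromEdgeSet (A : Set (Sym2 V))).ConnectedComponent : ℤ) =
      Fintype.card V + ∑ γ ∈ polymersOf G A, (1 - #γ.val.1 : ℤ) := by
  rw [sum_polymersOf hA fun γ ↦ (1 - #γ.1 : ℤ), sum_filter_of_ne fun c _ hc ↦ ?_,
    ← (fromEdgeSet (A : Set (Sym2 V))).sum_card_supp_toFinset, Nat.card_eq_fintype_card,
    ← card_univ]
  · simp [componentPolymer, sum_sub_distrib]
  · have := card_pos.mpr (Set.toFinset_nonempty.mpr c.nonempty_supp)
    simp only [componentPolymer] at hc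
    omega

theorem weight_eq_prod_polymersOf {K : Type*} [Field K] [DecidableRel G.Adj]
    {A : Finset (Sym2 V)} (hA : A ⊆ G.edgeFinset) {p q : K} (hp : 1 - p ≠ 0) (hq : q ≠ 0) :
    p ^ #A * (1 - p) ^ (#G.edgeFinset - #A) *
        q ^ Nat.card (fromEdgeSet (A : Set (Sym2 V))).ConnectedComponent =
      (1 - p) ^ #G.edgeFinset * q ^ Fintype.card V *
        ∏ γ ∈ polymersOf G A, (p / (1 - p)) ^ #γ.val.2 * q ^ (1 - #γ.val.1 : ℤ) := by
  have hA' : (A : Set (Sym2 V)) ⊆ G.edgeSet := by simpa using coe_subset.mpr hA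
  rw [prod_mul_distrib, prod_pow_eq_pow_sum, ← card_edgesOf pairwiseDisjoint_polymersOf,
    edgesOf_polymersOf hA', prod_zpow_eq_zpow_sum _ hq, ← zpow_natCast q (Nat.card _),
    natCard_connectedComponent_eq hA', zpow_add₀ hq, zpow_natCast, div_pow,
    pow_sub₀ _ hp (card_le_card hA)]
  ring

end Bijection

end RandomCluster

open RandomCluster

theorem random_cluster_eq_polymer_partition_function_general {V : Type*} [Fintype V]
    (G : SimpleGraph V) [DecidableRel G.Adj]
    (p q : ℝ) (hp1 : p < 1) (hq : 0 < q) :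
    (∑ A ∈ G.edgeFinset.powerset,
        p ^ A.card * (1 - p) ^ (G.edgeFinset.card - A.card) *
          q ^ Nat.card (SimpleGraph.fromEdgeSet (↑A : Set (Sym2 V))).ConnectedComponent) =
      (1 - p) ^ G.edgeFinset.card * q ^ Fintype.card V *
        ∑ Γ ∈ (Finset.univ :
            Finset (Finset {γ : Finset V × Finset (Sym2 V) // IsPolymer G γ})).filter
            (fun Γ => (↑Γ : Set {γ : Finset V × Finset (Sym2 V) // IsPolymer G γ}).Pairwise
              fun γ γ' => Disjoint γ.val.1 γ'.val.1),
          ∏ γ ∈ Γ, (p / (1 - p)) ^ γ.val.2.card * q ^ ((1 : ℤ) - γ.val.1.card) := by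
  -- the sum runs over the `Set`-coercions of the compatible families
  rw [mul_sum, bind_pure_comp, fmap_def, filter_image]
  refine Eq.trans ?_ (sum_image fun _ _ _ _ h ↦ coe_injective h).symm
  simp only [toFinset_coe]
  refine sum_nbij' (polymersOf G) edgesOf (fun A _ ↦ ?_) (fun Γ _ ↦ ?_) (fun A hA ↦ ?_)
    (fun Γ hΓ ↦ ?_) (fun A hA ↦ ?_)
  · simp only [mem_filter, mem_univ, true_and]
    exact pairwiseDisjoint_polymersOf
  · simpa [← coe_subset] using coe_edgesOf_subset
  · exact edgesOf_polymersOf (by simpa [← coe_subset] using hA)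
  · simp only [mem_filter, mem_univ, true_and] at hΓ
    exact polymersOf_edgesOf hΓ
  · exact weight_eq_prod_polymersOf (mem_powerset.mp hA) (by linarith) hq.ne'

theorem random_cluster_eq_polymer_partition_function {V : Type*} [Fintype V] [DecidableEq V]
    (G : SimpleGraph V) [DecidableRel G.Adj] (d : ℕ) (hdeg : ∀ v, G.degree v ≤ 2 * d)
    (p q : ℝ) (hp0 : 0 ≤ p) (hp1 : p < 1) (hq : 0 < q) :
    (∑ A ∈ G.edgeFinset.powerset,
        p ^ A.card * (1 - p) ^ (G.edgeFinset.card - A.card) *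
          q ^ Nat.card (SimpleGraph.fromEdgeSet (↑A : Set (Sym2 V))).ConnectedComponent) =
      (1 - p) ^ G.edgeFinset.card * q ^ Fintype.card V *
        ∑ Γ ∈ (Finset.univ :
            Finset (Finset {γ : Finset V × Finset (Sym2 V) // IsPolymer G γ})).filter
            (fun Γ => (↑Γ : Set {γ : Finset V × Finset (Sym2 V) // IsPolymer G γ}).Pairwise
              fun γ γ' => Disjoint γ.val.1 γ'.val.1),
          ∏ γ ∈ Γ, (p / (1 - p)) ^ γ.val.2.card * q ^ ((1 : ℤ) - γ.val.1.card) :=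
  random_cluster_eq_polymer_partition_function_general G p q hp1 hq
end

section
/- Let d ≥ 2, β ≤ (3 log q)/(4d), and suppose k > 5d and q ≥ C^{−20d} for some 0 < C < 1. If a connected subgraph γ of a graph of maximum degree 2d has k edges, then its polymer weight w_γ = (e^β − 1)^k q^{1−|V(γ)|} satisfies w_γ ≤ C^k. -/
/-!
Every vertex of `γ` meets at most `2d` of its edges and every edge has two ends, so double
counting gives `k ≤ d |V(γ)|`. Put `x = q^(1/(20d))`; then `q = x^(20d)`, `1/C ≤ x`, and the
bound on `β` gives `e^β - 1 ≤ x^15`. Hence `w_γ ≤ x^(15k + 20d(1 - |V(γ)|)) ≤ x^(-k) ≤ C^k`,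
where the middle inequality is `20d(|V(γ)| - 1) ≥ 20k - 20d ≥ 16k`, i.e. `k ≥ 5d`.
-/

open Finset Real

namespace SimpleGraph

theorem two_mul_card_le_card_mul_of_degree_le {V : Type*} [DecidableEq V]
    (G : SimpleGraph V) [G.LocallyFinite] {Δ : ℕ} (hdeg : ∀ v, G.degree v ≤ Δ)
    {s : Finset V} {B : Finset (Sym2 V)} (hB : ↑B ⊆ G.edgeSet) (hBs : ∀ e ∈ B, ∀ v ∈ e, v ∈ s) :
    2 * #B ≤ #s * Δ := by
  rw [mul_comm]
  refine card_mul_le_card_mul' (fun v e ↦ v ∈ e) (fun e he ↦ ?_) fun v _ ↦ ?_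
  · induction e with
    | h x y =>
      have hxy : x ≠ y := (G.mem_edgeSet.mp (hB he)).ne
      calc 2 = #{x, y} := (card_pair hxy).symm
        _ ≤ _ := card_le_card fun v hv ↦ by
          rw [mem_bipartiteBelow]
          rcases mem_insert.mp hv with rfl | hv
          · exact ⟨hBs _ he _ (Sym2.mem_mk_left _ _), Sym2.mem_mk_left _ _⟩
          · rw [mem_singleton.mp hv]
            exact ⟨hBs _ he _ (Sym2.mem_mk_right _ _), Sym2.mem_mk_right _ _⟩
  · calc #(B.bipartiteAbove _ v) ≤ #(G.incidenceFinset v) :=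
          card_le_card fun e he ↦ by
            rw [mem_bipartiteAbove] at he
            exact (G.mem_incidenceFinset v e).mpr ⟨hB he.1, he.2⟩
      _ = G.degree v := G.card_incidenceFinset_eq_degree v
      _ ≤ Δ := hdeg v

end SimpleGraph

theorem exp_le_rpow_of_le_mul_log {β a q : ℝ} (hq : 0 < q) (h : β ≤ a * log q) :
    exp β ≤ q ^ a := by
  rwa [le_rpow_iff_log_le (exp_pos β) hq, log_exp]

/-- The weight `w_γ` of a polymer `γ` with `k` edges and `n` vertices. -/
noncomputable def polymerWeight (β q : ℝ) (k n : ℕ) : ℝ :=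
  (exp β - 1) ^ k * q ^ ((1 : ℤ) - n)

theorem polymerWeight_le_pow {β q C : ℝ} {d k n : ℕ} (hβ0 : 0 ≤ β) (hq1 : 1 ≤ q)
    (hβ : β ≤ 3 * log q / (4 * d)) (hC0 : 0 < C) (hqC : C ^ (-(20 * d : ℤ)) ≤ q)
    (hkn : k ≤ n * d) (hk : 5 * d < k) :
    polymerWeight β q k n ≤ C ^ k := by
  have hd : 0 < d := Nat.pos_of_ne_zero fun h ↦ by simp [h] at hkn; omega
  set x := q ^ (1 / (20 * d : ℝ)) with hx
  have hx1 : 1 ≤ x := one_le_rpow hq1 (by positivity)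
  have hxq : x ^ (20 * d) = q := by
    rw [hx, ← rpow_natCast, ← rpow_mul (by linarith)]
    push_cast
    rw [one_div_mul_cancel (by positivity), rpow_one]
  have hCx : x⁻¹ ≤ C := by
    have : C⁻¹ ^ (20 * d) ≤ x ^ (20 * d) := by
      rwa [hxq, inv_pow, ← zpow_natCast, ← zpow_neg, Nat.cast_mul, Nat.cast_ofNat]
    rw [inv_le_comm₀ (by positivity) hC0]
    exact (pow_le_pow_iff_left₀ (by positivity) (by positivity) (by positivity)).mp this
  have hexp : exp β - 1 ≤ x ^ 15 := by
    have : x ^ 15 = q ^ (3 / (4 * d : ℝ)) := by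
      rw [hx, ← rpow_natCast, ← rpow_mul (by linarith)]
      congr 1
      field_simp
      norm_num
    have : exp β ≤ x ^ 15 :=
      this ▸ exp_le_rpow_of_le_mul_log (by linarith) (by convert hβ using 1; ring)
    linarith
  have hexponent : 15 * (k : ℤ) + 20 * d * (1 - n) ≤ -k := by
    have : (k : ℤ) ≤ n * d := by exact_mod_cast hkn
    linarith
  calc polymerWeight β q k n ≤ (x ^ 15) ^ k * (x ^ (20 * d)) ^ ((1 : ℤ) - n) := by
        rw [polymerWeight, hxq]
        gcongr
        linarith [add_one_le_exp β]
    _ = x ^ (15 * (k : ℤ) + 20 * d * (1 - n)) := by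
        rw [zpow_add₀ (by positivity), zpow_mul, zpow_mul]; norm_cast
    _ ≤ x ^ (-(k : ℤ)) := zpow_le_zpow_right₀ hx1 hexponent
    _ = x⁻¹ ^ k := by rw [zpow_neg, zpow_natCast, inv_pow]
    _ ≤ C ^ k := pow_le_pow_left₀ (by positivity) hCx k

theorem polymer_weight_bound_large_general {V : Type*} [Fintype V]
    (G : SimpleGraph V) [DecidableRel G.Adj] (d : ℕ)
    (hdeg : ∀ v, G.degree v ≤ 2 * d)
    (s : Finset V) (B : Finset (Sym2 V)) (hB : ↑B ⊆ G.edgeSet)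
    (hBs : ∀ e ∈ B, ∀ v ∈ e, v ∈ s)
    (β q C : ℝ) (hβ0 : 0 ≤ β) (hq1 : 1 ≤ q)
    (hβ : β ≤ 3 * Real.log q / (4 * d))
    (hC0 : 0 < C)
    (k : ℕ) (hk : k = B.card) (hk5d : 5 * d < k)
    (hqC : C ^ (-(20 * d : ℤ)) ≤ q) :
    (Real.exp β - 1) ^ k * q ^ ((1 : ℤ) - (s.card : ℤ)) ≤ C ^ k := by
  classical
  have hcount : k ≤ s.card * d := by
    have := G.two_mul_card_le_card_mul_of_degree_le hdeg hB hBs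
    rw [← hk, mul_left_comm] at this
    omega
  exact polymerWeight_le_pow hβ0 hq1 hβ hC0 hqC hcount hk5d

theorem polymer_weight_bound_large {V : Type*} [Fintype V] [DecidableEq V]
    (G : SimpleGraph V) [DecidableRel G.Adj] (d : ℕ) (hd : 2 ≤ d)
    (hdeg : ∀ v, G.degree v ≤ 2 * d)
    (s : Finset V) (B : Finset (Sym2 V)) (hB : ↑B ⊆ G.edgeSet)
    (hBs : ∀ e ∈ B, ∀ v ∈ e, v ∈ s)
    (hconn : (SimpleGraph.induce (↑s : Set V)
      (SimpleGraph.fromEdgeSet (↑B : Set (Sym2 V)))).Connected)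
    (β q C : ℝ) (hβ0 : 0 ≤ β) (hq1 : 1 ≤ q)
    (hβ : β ≤ 3 * Real.log q / (4 * d))
    (hC0 : 0 < C) (hC1 : C < 1)
    (k : ℕ) (hk : k = B.card) (hk5d : 5 * d < k)
    (hqC : C ^ (-(20 * d : ℤ)) ≤ q) :
    (Real.exp β - 1) ^ k * q ^ ((1 : ℤ) - (s.card : ℤ)) ≤ C ^ k :=
  polymer_weight_bound_large_general G d hdeg s B hB hBs β q C hβ0 hq1 hβ hC0 k hk hk5d hqC
end

section
/- Let ε ∈ (0, 1/N) and m = log(8/ε)/3. Suppose the cluster expansion tail bound ∑_{‖Γ‖=k} |φ(H_Γ)∏_{γ∈Γ} w_γ| ≤ N e^{−3k} holds for all k, and suppose for each polymer γ with ‖γ‖ ≤ m the approximate weight satisfies |log w̃_γ − log w_γ| ≤ ε‖γ‖². Then |T_m(w̃) − T_m(w)| ≤ Nε/8, where T_m is the cluster expansion truncated to clusters of total size less than m. -/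
/-!
Write `wt γ = w γ * exp (r γ)`. For a cluster `Γ` of size `s < m` every polymer in it has
size at most `m`, so `∑ |r γ| ≤ ε ∑ size γ ^ 2 ≤ ε s ^ 2 ≤ ε m ^ 2`, and
`ε m ^ 2 = 8 L ^ 2 e^{-L} / 9 ≤ 1` for `L = log (8 / ε) = 3 m`. Hence `|e^{∑ r} - 1| ≤ 2 ε s ^ 2`:
the cluster's term moves by at most `2 ε s ^ 2` times its absolute value under `w`. Grouping the
clusters by size and using the tail bound gives at most
`2 ε N ∑_{k ≥ 1} k ^ 2 e^{-3k} ≤ 2 ε N / 16`.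
-/

attribute [local instance] Classical.propDecidable

/-- The Ursell function of a graph `H` on `n` vertices. -/
noncomputable def ursell (n : ℕ) (H : SimpleGraph (Fin n)) : ℝ :=
  (1 / (Nat.factorial n : ℝ)) *
    ∑ A : Finset (Sym2 (Fin n)),
      if (↑A : Set (Sym2 (Fin n))) ⊆ H.edgeSet ∧
          (SimpleGraph.fromEdgeSet (↑A : Set (Sym2 (Fin n)))).Connected
        then (-1 : ℝ) ^ A.card else 0

/-- The incompatibility graph of a tuple of polymers. -/
def incompatGraph {V P : Type*} [DecidableEq V] (vset : P → Finset V) (Γ : List P) :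
    SimpleGraph (Fin Γ.length) :=
  SimpleGraph.fromRel fun i j => ¬ Disjoint (vset (Γ.get i)) (vset (Γ.get j))

/-- A cluster is a nonempty tuple of polymers whose incompatibility graph is connected. -/
def IsCluster {V P : Type*} [DecidableEq V] (vset : P → Finset V) (Γ : List P) : Prop :=
  Γ ≠ [] ∧ (incompatGraph vset Γ).Connected

/-- The cluster expansion truncated to clusters of total size less than `m`. -/
noncomputable def truncatedClusterExpansion {V P : Type*} [DecidableEq V]
    (vset : P → Finset V) (size : P → ℕ) (w : P → ℝ) (m : ℝ) : ℝ :=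
  ∑' Γ : {Γ : List P // IsCluster vset Γ ∧ ((Γ.map size).sum : ℝ) < m},
    ursell Γ.val.length (incompatGraph vset Γ.val) * (Γ.val.map w).prod

open Finset Real

theorem List.abs_sum_le_sum_map_abs (l : List ℝ) : |l.sum| ≤ (l.map abs).sum := by
  simpa using Multiset.abs_sum_le_sum_abs (s := (l : Multiset ℝ))

theorem List.sum_map_sq_le_sq_sum_map {ι R : Type*} [CommSemiring R] [PartialOrder R]
    [IsOrderedRing R] (l : List ι) (f : ι → R) (hf : ∀ i ∈ l, 0 ≤ f i) :
    (l.map fun i => f i ^ 2).sum ≤ (l.map f).sum ^ 2 := by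
  induction l with
  | nil => simp
  | cons a l ih =>
    have ha : 0 ≤ f a := hf a (by simp)
    have hl : 0 ≤ (l.map f).sum := List.sum_nonneg (by simpa using fun i hi => hf i (by simp [hi]))
    simp only [List.map_cons, List.sum_cons]
    calc f a ^ 2 + (l.map fun i => f i ^ 2).sum
        ≤ f a ^ 2 + (l.map f).sum ^ 2 := by gcongr; exact ih fun i hi => hf i (by simp [hi])
      _ ≤ f a ^ 2 + (l.map f).sum ^ 2 + 2 * (f a * (l.map f).sum) :=
        le_add_of_nonneg_right (mul_nonneg zero_le_two (mul_nonneg ha hl))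
      _ = (f a + (l.map f).sum) ^ 2 := by ring

theorem List.finite_setOf_sum_map_le {ι : Type*} [Finite ι] {size : ι → ℕ}
    (hsize : ∀ i, 1 ≤ size i) (n : ℕ) : {l : List ι | (l.map size).sum ≤ n}.Finite :=
  (List.finite_length_le ι n).subset fun l hl => le_trans (by
    simpa using List.length_le_sum_of_one_le (l.map size) (by simpa using fun i _ => hsize i)) hl

theorem List.abs_prod_map_sub_prod_map_le {ι : Type*} {l : List ι} {w wt : ι → ℝ}
    (hw : ∀ i ∈ l, 0 < w i) (hwt : ∀ i ∈ l, 0 < wt i) {δ : ℝ}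
    (hδ : (l.map fun i => |log (wt i) - log (w i)|).sum ≤ δ) (hδ1 : δ ≤ 1) :
    |(l.map wt).prod - (l.map w).prod| ≤ 2 * δ * (l.map w).prod := by
  set r := (l.map fun i => log (wt i) - log (w i)).sum
  have hprod : (l.map wt).prod = (l.map w).prod * exp r := by
    rw [exp_list_sum, List.map_map, ← List.prod_map_mul]
    refine congrArg List.prod (List.map_congr_left fun i hi => ?_)
    simp [exp_sub, exp_log (hw i hi), exp_log (hwt i hi), mul_div_cancel₀ _ (hw i hi).ne']
  have hr : |r| ≤ δ :=
    (List.abs_sum_le_sum_map_abs _).trans (by simpa [Function.comp_def] using hδ)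
  have hpos : 0 < (l.map w).prod := List.prod_pos (by simpa using hw)
  calc |(l.map wt).prod - (l.map w).prod| = (l.map w).prod * |exp r - 1| := by
        rw [hprod, ← mul_sub_one, abs_mul, abs_of_pos hpos]
    _ ≤ (l.map w).prod * (2 * δ) := by
        gcongr; exact (abs_exp_sub_one_le (hr.trans hδ1)).trans (by linarith)
    _ = 2 * δ * (l.map w).prod := by ring

theorem sum_range_sq_mul_exp_neg_three_mul_le (n : ℕ) :
    ∑ k ∈ range n, (k : ℝ) ^ 2 * exp (-3 * k) ≤ 1 / 16 := by
  have hexp3 : exp (-3) ≤ 1 / 20 := by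
    rw [exp_neg, inv_le_comm₀ (exp_pos _) (by norm_num), one_div, inv_inv,
      show (3 : ℝ) = (3 : ℕ) by norm_num, ← exp_one_pow]
    exact le_trans (by norm_num) (pow_le_pow_left₀ (by norm_num) exp_one_gt_d9.le 3)
  have hterm (k : ℕ) :
      ((k + 1 : ℕ) : ℝ) ^ 2 * exp (-3 * (k + 1 : ℕ)) ≤ 1 / 20 * (1 / 5) ^ k := by
    have h4 : ((k + 1 : ℕ) : ℝ) ^ 2 ≤ 4 ^ k :=
      calc ((k + 1 : ℕ) : ℝ) ^ 2 ≤ ((2 ^ k : ℕ) : ℝ) ^ 2 := by gcongr; exact Nat.lt_two_pow_self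
        _ = 4 ^ k := by push_cast; rw [← pow_mul, mul_comm, pow_mul]; norm_num
    calc ((k + 1 : ℕ) : ℝ) ^ 2 * exp (-3 * (k + 1 : ℕ))
        = ((k + 1 : ℕ) : ℝ) ^ 2 * exp (-3) ^ (k + 1) := by rw [← exp_nat_mul]; ring_nf
      _ ≤ 4 ^ k * (1 / 20) ^ (k + 1) := by gcongr
      _ = 1 / 20 * (1 / 5) ^ k := by rw [pow_succ, ← mul_assoc, ← mul_pow]; norm_num; ring
  cases n with
  | zero => norm_num
  | succ n =>
    rw [sum_range_succ', Nat.cast_zero, sq, zero_mul, zero_mul, add_zero]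
    calc ∑ k ∈ range n, ((k + 1 : ℕ) : ℝ) ^ 2 * exp (-3 * (k + 1 : ℕ))
        ≤ ∑ k ∈ range n, 1 / 20 * (1 / 5 : ℝ) ^ k := sum_le_sum fun k _ => hterm k
      _ ≤ 1 / 20 * ((1 / 5) ^ 0 / (1 - 1 / 5)) := by
        rw [← mul_sum, ← Nat.Ico_zero_eq_range]
        gcongr
        exact geom_sum_Ico_le_of_lt_one (by norm_num) (by norm_num)
      _ = 1 / 16 := by norm_num

theorem mul_sq_le_one_of_le_log_div {ε x : ℝ} (hε : 0 < ε) (hx0 : 0 ≤ x)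
    (hx : x ≤ log (8 / ε) / 3) : ε * x ^ 2 ≤ 1 := by
  set L := log (8 / ε)
  have hL : 0 ≤ L := hx0.trans (by linarith)
  have hε_eq : ε = 8 * exp (-L) := by
    rw [exp_neg, exp_log (by positivity)]; field_simp
  have hcubic : 1 + L + L ^ 2 / 2 + L ^ 3 / 6 ≤ exp L := by
    simpa [sum_range_succ, Nat.factorial] using sum_le_exp_of_nonneg hL 4
  calc ε * x ^ 2 ≤ ε * (L / 3) ^ 2 := by gcongr
    _ = 8 * L ^ 2 / (9 * exp L) := by rw [hε_eq, exp_neg]; field_simp; ring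
    _ ≤ 1 := by
      rw [div_le_one (by positivity)]
      nlinarith [mul_nonneg hL (sq_nonneg (L - 7 / 6))]

section Regrouping

variable {α M : Type*} [AddCommMonoid M] [TopologicalSpace M]

theorem tsum_subtype_eq_sum_toFinset {p : α → Prop} (hp : {x | p x}.Finite) (f : α → M) :
    ∑' x : {x // p x}, f x = ∑ x ∈ hp.toFinset, f x := by
  rw [← Finset.tsum_subtype']
  exact tsum_congr_set_coe f hp.coe_toFinset.symm

theorem tsum_subtype_cast_lt_eq_sum_range {size : α → ℕ}
    (hfin : ∀ n, {x | size x ≤ n}.Finite) (p : α → Prop) (f : α → M) (m : ℝ) :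
    ∑' x : {x // p x ∧ (size x : ℝ) < m}, f x =
      ∑ k ∈ range ⌈m⌉₊, ∑' x : {x // p x ∧ size x = k}, f x := by
  have hlt : {x | p x ∧ (size x : ℝ) < m}.Finite :=
    (hfin ⌈m⌉₊).subset fun x hx => (Nat.lt_ceil.2 hx.2).le
  have heq (k : ℕ) : {x | p x ∧ size x = k}.Finite := (hfin k).subset fun x hx => hx.2.le
  rw [tsum_subtype_eq_sum_toFinset hlt,
    ← sum_fiberwise_of_maps_to (t := range ⌈m⌉₊) (g := size) fun x hx => by
      simpa [Nat.lt_ceil] using ((Set.Finite.mem_toFinset hlt).1 hx).2]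
  refine sum_congr rfl fun k hk => ?_
  rw [tsum_subtype_eq_sum_toFinset (heq k)]
  congr 1
  ext x
  simp only [mem_filter, Set.Finite.mem_toFinset, Set.mem_ofPred_eq, and_assoc]
  constructor
  · rintro ⟨hx, -, rfl⟩; exact ⟨hx, rfl⟩
  · rintro ⟨hx, rfl⟩; exact ⟨hx, Nat.lt_ceil.1 (mem_range.1 hk), rfl⟩

end Regrouping

theorem abs_tsum_sub_tsum_le_of_finite {β : Type*} [Finite β] {f g h : β → ℝ}
    (hfg : ∀ b, |f b - g b| ≤ h b) : |∑' b, f b - ∑' b, g b| ≤ ∑' b, h b := by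
  rw [← Summable.of_finite.tsum_sub Summable.of_finite, ← Real.norm_eq_abs]
  exact (norm_tsum_le_tsum_norm Summable.of_finite).trans <|
    Summable.of_finite.tsum_le_tsum (fun b => (Real.norm_eq_abs _).trans_le (hfg b))
      Summable.of_finite

theorem abs_mul_prod_map_sub_le_of_abs_log_sub_le {ι : Type*} {l : List ι} {w wt : ι → ℝ}
    (hw : ∀ i ∈ l, 0 < w i) (hwt : ∀ i ∈ l, 0 < wt i) (size : ι → ℕ) {ε : ℝ} (hε : 0 ≤ ε)
    (happrox : ∀ i ∈ l, |log (wt i) - log (w i)| ≤ ε * (size i : ℝ) ^ 2)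
    (hsmall : ε * ((l.map size).sum : ℝ) ^ 2 ≤ 1) (c : ℝ) :
    |c * (l.map wt).prod - c * (l.map w).prod| ≤
      2 * ε * ((l.map size).sum : ℝ) ^ 2 * |c * (l.map w).prod| := by
  have hδ : (l.map fun i => |log (wt i) - log (w i)|).sum ≤ ε * ((l.map size).sum : ℝ) ^ 2 :=
    calc (l.map fun i => |log (wt i) - log (w i)|).sum
        ≤ (l.map fun i => ε * (size i : ℝ) ^ 2).sum := List.sum_le_sum happrox
      _ = ε * (l.map fun i => (size i : ℝ) ^ 2).sum := List.sum_map_mul_left ..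
      _ ≤ ε * (l.map fun i => (size i : ℝ)).sum ^ 2 := by
        gcongr; exact List.sum_map_sq_le_sq_sum_map _ _ fun _ _ => Nat.cast_nonneg _
      _ = ε * ((l.map size).sum : ℝ) ^ 2 := by rw [Nat.cast_list_sum, List.map_map]; rfl
  rw [← mul_sub, abs_mul, abs_mul, abs_of_pos (List.prod_pos (s := l.map w) (by simpa using hw))]
  calc |c| * |(l.map wt).prod - (l.map w).prod|
      ≤ |c| * (2 * (ε * ((l.map size).sum : ℝ) ^ 2) * (l.map w).prod) := by
        gcongr; exact List.abs_prod_map_sub_prod_map_le hw hwt hδ hsmall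
    _ = _ := by ring

theorem truncated_cluster_expansion_stability_general {V P : Type*} [Fintype V] [DecidableEq V]
    [Fintype P] (vset : P → Finset V)
    (size : P → ℕ) (hsize : ∀ γ, 1 ≤ size γ)
    (w wt : P → ℝ) (hw : ∀ γ, 0 < w γ) (hwt : ∀ γ, 0 < wt γ)
    (ε m : ℝ) (hε0 : 0 < ε)
    (hm : m = Real.log (8 / ε) / 3)
    (htail : ∀ k : ℕ,
      ∑' Γ : {Γ : List P // IsCluster vset Γ ∧ (Γ.map size).sum = k},
          |ursell Γ.val.length (incompatGraph vset Γ.val) * (Γ.val.map w).prod| ≤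
        (Fintype.card V : ℝ) * Real.exp (-3 * k))
    (happrox : ∀ γ : P, (size γ : ℝ) ≤ m →
      |Real.log (wt γ) - Real.log (w γ)| ≤ ε * (size γ : ℝ) ^ 2) :
    |truncatedClusterExpansion vset size wt m - truncatedClusterExpansion vset size w m| ≤
      (Fintype.card V : ℝ) * ε / 8 := by
  set N : ℝ := (Fintype.card V : ℝ)
  set a : List P → ℝ := fun Γ => |ursell Γ.length (incompatGraph vset Γ) * (Γ.map w).prod|
  have hfin := List.finite_setOf_sum_map_le hsize
  have : Finite {Γ : List P // IsCluster vset Γ ∧ ((Γ.map size).sum : ℝ) < m} :=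
    ((hfin ⌈m⌉₊).subset fun Γ hΓ => (Nat.lt_ceil.2 hΓ.2).le).to_subtype
  have hterm (Γ : {Γ : List P // IsCluster vset Γ ∧ ((Γ.map size).sum : ℝ) < m}) :
      |ursell Γ.val.length (incompatGraph vset Γ.val) * (Γ.val.map wt).prod -
          ursell Γ.val.length (incompatGraph vset Γ.val) * (Γ.val.map w).prod| ≤
        2 * ε * ((Γ.val.map size).sum : ℝ) ^ 2 * a Γ := by
    obtain ⟨Γ, -, hlt⟩ := Γ
    refine abs_mul_prod_map_sub_le_of_abs_log_sub_le (fun γ _ => hw γ) (fun γ _ => hwt γ) size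
      hε0.le (fun γ hγ => happrox γ ?_)
      (mul_sq_le_one_of_le_log_div hε0 (Nat.cast_nonneg _) (hm ▸ hlt.le)) _
    exact (Nat.cast_le.2 (List.le_sum_of_mem (List.mem_map_of_mem hγ))).trans hlt.le
  calc _ ≤ ∑' Γ : {Γ : List P // IsCluster vset Γ ∧ ((Γ.map size).sum : ℝ) < m},
          2 * ε * ((Γ.val.map size).sum : ℝ) ^ 2 * a Γ := abs_tsum_sub_tsum_le_of_finite hterm
    _ = ∑ k ∈ range ⌈m⌉₊, 2 * ε * k ^ 2 *
          ∑' Γ : {Γ : List P // IsCluster vset Γ ∧ (Γ.map size).sum = k}, a Γ := by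
        rw [tsum_subtype_cast_lt_eq_sum_range hfin _
          fun Γ => 2 * ε * ((Γ.map size).sum : ℝ) ^ 2 * a Γ]
        refine sum_congr rfl fun k _ => ?_
        rw [← tsum_mul_left]
        exact tsum_congr fun Γ => by rw [Γ.2.2]
    _ ≤ ∑ k ∈ range ⌈m⌉₊, 2 * ε * k ^ 2 * (N * exp (-3 * k)) := by gcongr; exact htail _
    _ = 2 * ε * N * ∑ k ∈ range ⌈m⌉₊, (k : ℝ) ^ 2 * exp (-3 * k) := by
        rw [mul_sum]; exact sum_congr rfl fun _ _ => by ring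
    _ ≤ 2 * ε * N * (1 / 16) := by gcongr; exact sum_range_sq_mul_exp_neg_three_mul_le _
    _ = N * ε / 8 := by ring

theorem truncated_cluster_expansion_stability {V P : Type*} [Fintype V] [DecidableEq V]
    [Fintype P] (G : SimpleGraph V) (vset : P → Finset V)
    (size : P → ℕ) (hsize : ∀ γ, 1 ≤ size γ)
    (w wt : P → ℝ) (hw : ∀ γ, 0 < w γ) (hwt : ∀ γ, 0 < wt γ)
    (ε m : ℝ) (hε0 : 0 < ε) (hεN : ε < 1 / (Fintype.card V : ℝ))
    (hm : m = Real.log (8 / ε) / 3)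
    (htail : ∀ k : ℕ,
      ∑' Γ : {Γ : List P // IsCluster vset Γ ∧ (Γ.map size).sum = k},
          |ursell Γ.val.length (incompatGraph vset Γ.val) * (Γ.val.map w).prod| ≤
        (Fintype.card V : ℝ) * Real.exp (-3 * k))
    (happrox : ∀ γ : P, (size γ : ℝ) ≤ m →
      |Real.log (wt γ) - Real.log (w γ)| ≤ ε * (size γ : ℝ) ^ 2) :
    |truncatedClusterExpansion vset size wt m - truncatedClusterExpansion vset size w m| ≤
      (Fintype.card V : ℝ) * ε / 8 :=
  truncated_cluster_expansion_stability_general vset size hsize w wt hw hwt ε m hε0 hm htail happrox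
end
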